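/- Let n ≥ 2 and let ζ = ξ + iη ∈ ℂ^{n+1} satisfy ζ·ζ = 0, ζ ≠ 0, and ‖ξ‖ ≥ 1. Then there exists x ∈ S^n with ζ·x = 1, i.e., the corresponding complex horosphere contains a real point. -/

import Mathlib

open scoped InnerProductSpace

/-! Writing `ζ = ξ + iη`, the imaginary part of `ζ·ζ = 0` says `⟪ξ, η⟫ = 0`, and
`ζ·x = ⟪ξ, x⟫ + i⟪η, x⟫` for real `x`. So it suffices to find a unit vector `x` with `⟪ξ, x⟫ = 1` and `⟪η, x⟫ = 0`: take
`x = ξ / ‖ξ‖² + √(1 - ‖ξ‖⁻²) u` with `u` a unit vector orthogonal to `ξ` and `η`, which exists as the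
dimension is at least 3. -/

section Orthogonal

variable {E : Type*} [NormedAddCommGroup E] [InnerProductSpace ℝ E]

theorem exists_norm_eq_one_inner_eq_zero_pair [FiniteDimensional ℝ E]
    (hE : 3 ≤ Module.finrank ℝ E) (v w : E) :
    ∃ u : E, ‖u‖ = 1 ∧ ⟪v, u⟫_ℝ = 0 ∧ ⟪w, u⟫_ℝ = 0 := by
  classical
  set K := Submodule.span ℝ (({v, w} : Finset E) : Set E)
  have hK : Module.finrank ℝ K ≤ 2 :=
    (finrank_span_finset_le_card _).trans Finset.card_le_two
  have : Nontrivial Kᗮ := by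
    rw [← Module.finrank_pos_iff (R := ℝ)]
    have := K.finrank_add_finrank_orthogonal
    omega
  obtain ⟨u, hu⟩ := exists_norm_eq Kᗮ zero_le_one
  refine ⟨u, hu, ?_, ?_⟩ <;>
    exact K.inner_right_of_mem_orthogonal (Submodule.subset_span (by simp)) u.2

theorem exists_norm_eq_one_inner_eq_one_inner_eq_zero [FiniteDimensional ℝ E]
    (hE : 3 ≤ Module.finrank ℝ E) {ξ η : E} (hξ : 1 ≤ ‖ξ‖) (hξη : ⟪ξ, η⟫_ℝ = 0) :
    ∃ x : E, ‖x‖ = 1 ∧ ⟪ξ, x⟫_ℝ = 1 ∧ ⟪η, x⟫_ℝ = 0 := by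
  obtain ⟨u, hu, hξu, hηu⟩ := exists_norm_eq_one_inner_eq_zero_pair hE ξ η
  set a := (‖ξ‖ ^ 2)⁻¹
  have ha : a * ‖ξ‖ ^ 2 = 1 := inv_mul_cancel₀ (by positivity)
  have ha₀ : 0 ≤ a := by positivity
  set b := √(1 - a)
  have hb : b * b = 1 - a :=
    Real.mul_self_sqrt (by linarith [inv_le_one_of_one_le₀ (one_le_pow₀ (n := 2) hξ)])
  refine ⟨a • ξ + b • u, ?_, ?_, ?_⟩
  · have hsq : ‖a • ξ + b • u‖ * ‖a • ξ + b • u‖ = 1 := by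
      rw [norm_add_sq_eq_norm_sq_add_norm_sq_real
          (by rw [real_inner_smul_left, real_inner_smul_right, hξu]; ring),
        norm_smul, norm_smul, hu, Real.norm_of_nonneg ha₀,
        Real.norm_of_nonneg (Real.sqrt_nonneg _)]
      linear_combination a * ha + hb
    nlinarith [norm_nonneg (a • ξ + b • u)]
  · rw [inner_add_right, real_inner_smul_right, real_inner_smul_right, hξu,
      real_inner_self_eq_norm_sq, ha]
    ring
  · rw [inner_add_right, real_inner_smul_right, real_inner_smul_right, hηu,
      real_inner_comm, hξη]
    ring

end Orthogonal

section ComplexPairing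

variable {ι : Type*} [Fintype ι] {ζ : ι → ℂ} {ξ η : EuclideanSpace ℝ ι}

theorem im_sum_sq_eq_two_mul_inner (hξ : ∀ j, ξ j = (ζ j).re) (hη : ∀ j, η j = (ζ j).im) :
    (∑ j, ζ j ^ 2).im = 2 * ⟪ξ, η⟫_ℝ := by
  simp only [Complex.im_sum, PiLp.inner_apply, Finset.mul_sum, hξ, hη, sq, Complex.mul_im,
    RCLike.inner_apply, conj_trivial]
  exact Finset.sum_congr rfl fun j _ => by ring

theorem sum_mul_ofReal_eq (hξ : ∀ j, ξ j = (ζ j).re) (hη : ∀ j, η j = (ζ j).im)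
    (x : EuclideanSpace ℝ ι) :
    ∑ j, ζ j * (x j : ℂ) = ⟪ξ, x⟫_ℝ + ⟪η, x⟫_ℝ * Complex.I := by
  apply Complex.ext <;>
    simp [Complex.re_sum, Complex.im_sum, PiLp.inner_apply, hξ, hη, mul_comm]

end ComplexPairing

theorem stmt2_general (n : ℕ) (hn : 2 ≤ n) (ζ : Fin (n + 1) → ℂ)
    (ξ : EuclideanSpace ℝ (Fin (n + 1))) (hξ : ∀ j, ξ j = (ζ j).re)
    (hiso : ∑ j, ζ j ^ 2 = 0) (hnorm : 1 ≤ ‖ξ‖) :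
    ∃ x : EuclideanSpace ℝ (Fin (n + 1)),
      ‖x‖ = 1 ∧ ∑ j, ζ j * (x j : ℂ) = 1 := by
  set η : EuclideanSpace ℝ (Fin (n + 1)) := WithLp.toLp 2 fun j => (ζ j).im
  have hη : ∀ j, η j = (ζ j).im := fun _ => rfl
  have hξη : ⟪ξ, η⟫_ℝ = 0 := by
    have := im_sum_sq_eq_two_mul_inner hξ hη
    rw [hiso, Complex.zero_im] at this
    linarith
  have hdim : 3 ≤ Module.finrank ℝ (EuclideanSpace ℝ (Fin (n + 1))) := by
    rw [finrank_euclideanSpace_fin]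
    omega
  obtain ⟨x, hx, hξx, hηx⟩ := exists_norm_eq_one_inner_eq_one_inner_eq_zero hdim hnorm hξη
  refine ⟨x, hx, ?_⟩
  rw [sum_mul_ofReal_eq hξ hη, hξx, hηx]
  simp

/-- if n ≥ 2, ζ·ζ = 0, ζ ≠ 0 and ‖Re ζ‖ ≥ 1, then the corresponding
complex horosphere contains a real point of S^n. -/
theorem stmt2 (n : ℕ) (hn : 2 ≤ n) (ζ : Fin (n + 1) → ℂ)
    (ξ : EuclideanSpace ℝ (Fin (n + 1))) (hξ : ∀ j, ξ j = (ζ j).re)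
    (hζ : ζ ≠ 0) (hiso : ∑ j, ζ j ^ 2 = 0) (hnorm : 1 ≤ ‖ξ‖) :
    ∃ x : EuclideanSpace ℝ (Fin (n + 1)),
      ‖x‖ = 1 ∧ ∑ j, ζ j * (x j : ℂ) = 1 :=
  stmt2_general n hn ζ ξ hξ hiso hnorm
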